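/- arXiv:1707.07730 — 2 statements merged into one kernel-verified Lean document; each statement's English description precedes it below -/
import Mathlib

section
/- Let (d_i)_{i≥1} be an infinite alternate Lyndon word with Lyndon system M, language L_M, and H_n the number of words of length n in L_M. Let A(n) = a_1a_2⋯a_n and B(n) = b_1b_2⋯b_n be two words of L_M with A(n) ≺ B(n), and let Γ_{A,B}(n) be the number of words X(n) = x_1⋯x_n ∈ L_M with A(n) ⪯ X(n) ⪯ B(n). Then Γ_{A,B}(n) = Σ_{i=1}^{n} (−1)^i (b_i − a_i) H_{n−i} + 1. -/
open Filter Topology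

/-- Alternate (Ito–Sadahiro) strict order on infinite sequences (0-indexed: entry `i`
is the `(i+1)`-th letter `x_{i+1}` of the paper). `altLt x y` iff at the first index
where they differ the comparison alternates with the parity of the index:
`(-1)^k (x_k - y_k) < 0` in 1-based indexing. -/
def altLt (x y : ℕ → ℕ) : Prop :=
  ∃ k : ℕ, (∀ i < k, x i = y i) ∧ (if Even k then y k < x k else x k < y k)

def altLe (x y : ℕ → ℕ) : Prop := x = y ∨ altLt x y

def shiftSeq (x : ℕ → ℕ) (k : ℕ) : ℕ → ℕ := fun i => x (k + i)

/-- An alternate Lyndon word: smaller (in the alternate order) than all of its shifts. -/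
def IsAltLyndon (d : ℕ → ℕ) : Prop := ∀ k : ℕ, altLe d (shiftSeq d k)

/-- The Lyndon system associated to `d`: sequences over the alphabet `{0, …, d_1}`
all of whose shifts dominate `d` in the alternate order. -/
def LyndonSystem (d : ℕ → ℕ) : Set (ℕ → ℕ) :=
  {x | (∀ i, x i ≤ d 0) ∧ ∀ k : ℕ, altLe d (shiftSeq x k)}

def IsFactorOf (w : List ℕ) (x : ℕ → ℕ) : Prop :=
  ∃ k : ℕ, w = (List.range w.length).map (fun i => x (k + i))

/-- The language of the Lyndon system: finite factors of its elements. -/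
def LyndonLang (d : ℕ → ℕ) : Set (List ℕ) :=
  {w | ∃ x ∈ LyndonSystem d, IsFactorOf w x}

/-- `Hword d n` is the number of words of length `n` in the language `L_M`. -/
noncomputable def Hword (d : ℕ → ℕ) (n : ℕ) : ℕ :=
  Set.ncard {w : List ℕ | w ∈ LyndonLang d ∧ w.length = n}

/-- The topological entropy of the Lyndon system of `d` equals `h`,
i.e. `lim_{n→∞} (log H_n)/n = h`. -/
def EntropyIs (d : ℕ → ℕ) (h : ℝ) : Prop :=
  Filter.Tendsto (fun n : ℕ => Real.log (Hword d n) / n) Filter.atTop (nhds h)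

/-- A finite word viewed as an infinite sequence, padded by zeros on the right. -/
def padSeq (w : List ℕ) : ℕ → ℕ := fun i => w.getD i 0
/-- The alternate order on finite words (padding with zeros). -/
def altLtList (v w : List ℕ) : Prop := altLt (padSeq v) (padSeq w)
def altLeList (v w : List ℕ) : Prop := altLe (padSeq v) (padSeq w)

/-!
Let `N(w)` be the number of words of `L_M` of the length of `w` lying strictly above `w`.
Comparing first letters, `c' v` lies above `c u` iff `c' < c`, or `c' = c` and `v` lies below
`u` (the order flips after one letter). Every letter `c' < d_1` may precede any word of `L_M`, and
`c v ∈ L_M` whenever `c u ∈ L_M` and `v ∈ L_M` lies below `u`, because then `c u x ≺ c v y` for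
all continuations. Hence `N(c u) = c H_{n-1} + #{v ≺ u} = (c + 1) H_{n-1} - 1 - N(u)`, so
`N(w) + Σ_i (-1)^i w_i H_{n-i}` depends only on `n = |w|`, and `Γ_{A,B}(n) = N(A) - N(B) + 1`.
-/

section AltOrder

lemma altLt_irrefl (x : ℕ → ℕ) : ¬ altLt x x := by
  rintro ⟨k, -, hk⟩
  split_ifs at hk <;> omega

lemma altLt_trans {x y z : ℕ → ℕ} (hxy : altLt x y) (hyz : altLt y z) : altLt x z := by
  obtain ⟨k, hk, hxyk⟩ := hxy
  obtain ⟨l, hl, hyzl⟩ := hyz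
  rcases lt_trichotomy k l with hkl | rfl | hlk
  · exact ⟨k, fun i hi => (hk i hi).trans (hl i (hi.trans hkl)), hl k hkl ▸ hxyk⟩
  · exact ⟨k, fun i hi => (hk i hi).trans (hl i hi), by split_ifs at * <;> omega⟩
  · exact ⟨l, fun i hi => (hk i (hi.trans hlk)).trans (hl i hi), (hk l hlk).symm ▸ hyzl⟩

lemma altLt_asymm {x y : ℕ → ℕ} (hxy : altLt x y) : ¬ altLt y x :=
  fun hyx => altLt_irrefl x (altLt_trans hxy hyx)

lemma altLt_of_altLe_of_altLt {x y z : ℕ → ℕ} (hxy : altLe x y) (hyz : altLt y z) :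
    altLt x z := by
  rcases hxy with rfl | hxy
  exacts [hyz, altLt_trans hxy hyz]

lemma altLt_or_altLt_of_ne {x y : ℕ → ℕ} (hne : x ≠ y) : altLt x y ∨ altLt y x := by
  classical
  have hex : ∃ k, x k ≠ y k := Function.ne_iff.mp hne
  obtain ⟨k, hbefore, hk⟩ : ∃ k, (∀ i < k, x i = y i) ∧ x k ≠ y k :=
    ⟨Nat.find hex, fun i hi => not_not.mp (Nat.find_min hex hi), Nat.find_spec hex⟩
  by_cases hxy : if Even k then y k < x k else x k < y k
  · exact Or.inl ⟨k, hbefore, hxy⟩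
  · exact Or.inr ⟨k, fun i hi => (hbefore i hi).symm, by split_ifs at hxy ⊢ <;> omega⟩

lemma altLt_iff_head {x y : ℕ → ℕ} :
    altLt x y ↔ y 0 < x 0 ∨ (x 0 = y 0 ∧ altLt (shiftSeq y 1) (shiftSeq x 1)) := by
  constructor
  · rintro ⟨_ | k, hbefore, hk⟩
    · exact Or.inl (by simpa using hk)
    · refine Or.inr ⟨hbefore 0 k.succ_pos, k, fun i hi => ?_, ?_⟩
      · simpa [shiftSeq, add_comm] using (hbefore (i + 1) (by omega)).symm
      · simp only [shiftSeq, add_comm 1 k, Nat.even_add_one] at hk ⊢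
        split_ifs at hk ⊢ <;> omega
  · rintro (h | ⟨h0, k, hbefore, hk⟩)
    · exact ⟨0, fun _ hi => absurd hi (Nat.not_lt_zero _), by simpa using h⟩
    · refine ⟨k + 1, fun i hi => ?_, ?_⟩
      · cases i with
        | zero => exact h0
        | succ i => simpa [shiftSeq, add_comm] using (hbefore i (by omega)).symm
      · simp only [shiftSeq, add_comm 1 k, Nat.even_add_one] at hk ⊢
        split_ifs at hk ⊢ <;> omega

end AltOrder

section Words

lemma injective_cons_pair : Function.Injective fun p : ℕ × List ℕ => p.1 :: p.2 :=
  fun _ _ h => Prod.ext (List.cons.inj h).1 (List.cons.inj h).2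

lemma padSeq_eq_zero {w : List ℕ} {i : ℕ} (h : w.length ≤ i) : padSeq w i = 0 :=
  List.getD_eq_default w 0 h

lemma eq_of_padSeq_eq {u v : List ℕ} (hlen : u.length = v.length) (h : padSeq u = padSeq v) :
    u = v := by
  refine List.ext_getElem hlen fun i hu hv => ?_
  simpa [padSeq, List.getD_eq_getElem?_getD, hu, hv] using congrFun h i

lemma altLtList_trichotomy {u v : List ℕ} (hlen : u.length = v.length) :
    altLtList u v ∨ u = v ∨ altLtList v u := by
  by_cases h : padSeq u = padSeq v
  · exact Or.inr (Or.inl (eq_of_padSeq_eq hlen h))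
  · exact (altLt_or_altLt_of_ne h).imp_right Or.inr

lemma shiftSeq_padSeq_cons (c : ℕ) (u : List ℕ) : shiftSeq (padSeq (c :: u)) 1 = padSeq u := by
  funext i
  simp [shiftSeq, padSeq, add_comm]

lemma altLtList_cons_cons_iff {c c' : ℕ} {u v : List ℕ} :
    altLtList (c :: u) (c' :: v) ↔ c' < c ∨ (c = c' ∧ altLtList v u) := by
  rw [altLtList, altLt_iff_head, shiftSeq_padSeq_cons, shiftSeq_padSeq_cons]
  rfl

lemma padSeq_eq_of_eq_map_range {w : List ℕ} {x : ℕ → ℕ} {i : ℕ}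
    (hw : w = (List.range w.length).map x) (hi : i < w.length) : padSeq w i = x i := by
  rw [hw]
  simp [padSeq, List.getD_eq_getElem?_getD, hi]

lemma altLt_of_altLtList {u v : List ℕ} {x y : ℕ → ℕ} (hu : u = (List.range u.length).map x)
    (hv : v = (List.range v.length).map y) (hlen : u.length = v.length) (h : altLtList u v) :
    altLt x y := by
  obtain ⟨k, hbefore, hk⟩ := h
  have hku : k < u.length := by
    by_contra! hku
    rw [padSeq_eq_zero hku, padSeq_eq_zero (hlen ▸ hku)] at hk
    split_ifs at hk <;> omega
  refine ⟨k, fun i hi => ?_, ?_⟩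
  · rw [← padSeq_eq_of_eq_map_range hu (hi.trans hku),
      ← padSeq_eq_of_eq_map_range hv (hlen ▸ hi.trans hku)]
    exact hbefore i hi
  · rwa [← padSeq_eq_of_eq_map_range hu hku, ← padSeq_eq_of_eq_map_range hv (hlen ▸ hku)]

end Words

section Language

variable {d : ℕ → ℕ}

lemma shiftSeq_zero (x : ℕ → ℕ) : shiftSeq x 0 = x :=
  funext fun i => by simp [shiftSeq]

lemma shiftSeq_shiftSeq (x : ℕ → ℕ) (j k : ℕ) : shiftSeq (shiftSeq x j) k = shiftSeq x (j + k) :=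
  funext fun i => by simp [shiftSeq, add_assoc]

lemma shiftSeq_mem_lyndonSystem {x : ℕ → ℕ} (hx : x ∈ LyndonSystem d) (j : ℕ) :
    shiftSeq x j ∈ LyndonSystem d :=
  ⟨fun i => hx.1 (j + i), fun k => by rw [shiftSeq_shiftSeq]; exact hx.2 (j + k)⟩

lemma mem_lyndonLang_iff {w : List ℕ} :
    w ∈ LyndonLang d ↔ ∃ x ∈ LyndonSystem d, w = (List.range w.length).map x := by
  constructor
  · rintro ⟨x, hx, k, hw⟩
    exact ⟨shiftSeq x k, shiftSeq_mem_lyndonSystem hx k, hw⟩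
  · rintro ⟨x, hx, hw⟩
    exact ⟨x, hx, 0, by simpa using hw⟩

lemma map_range_succ_eq_cons (x : ℕ → ℕ) (m : ℕ) :
    (List.range (m + 1)).map x = x 0 :: (List.range m).map (shiftSeq x 1) := by
  simp [List.range_succ_eq_map, shiftSeq, Function.comp_def, add_comm]

def seqCons (c : ℕ) (x : ℕ → ℕ) : ℕ → ℕ
  | 0 => c
  | i + 1 => x i

lemma shiftSeq_seqCons (c : ℕ) (x : ℕ → ℕ) (k : ℕ) :
    shiftSeq (seqCons c x) (k + 1) = shiftSeq x k :=
  funext fun i => by rw [shiftSeq, shiftSeq, show k + 1 + i = k + i + 1 by omega]; rfl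

lemma shiftSeq_one_seqCons (c : ℕ) (x : ℕ → ℕ) : shiftSeq (seqCons c x) 1 = x := by
  rw [← zero_add 1, shiftSeq_seqCons, shiftSeq_zero]

lemma cons_mem_lyndonLang_of_prefix {c : ℕ} {y : ℕ → ℕ} {v : List ℕ}
    (hy : y ∈ LyndonSystem d) (hv : v = (List.range v.length).map y) (hc : c ≤ d 0)
    (hd : altLe d (seqCons c y)) :
    c :: v ∈ LyndonLang d := by
  refine mem_lyndonLang_iff.mpr ⟨seqCons c y, ⟨fun i => ?_, fun k => ?_⟩, ?_⟩
  · cases i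
    exacts [hc, hy.1 _]
  · cases k with
    | zero => rwa [shiftSeq_zero]
    | succ k => rw [shiftSeq_seqCons]; exact hy.2 k
  · rw [List.length_cons, map_range_succ_eq_cons, shiftSeq_one_seqCons, ← hv]
    rfl

lemma le_and_mem_of_cons_mem {c : ℕ} {v : List ℕ} (h : c :: v ∈ LyndonLang d) :
    c ≤ d 0 ∧ v ∈ LyndonLang d := by
  obtain ⟨x, hx, hw⟩ := mem_lyndonLang_iff.mp h
  rw [List.length_cons, map_range_succ_eq_cons, List.cons.injEq] at hw
  exact ⟨hw.1 ▸ hx.1 0, mem_lyndonLang_iff.mpr ⟨_, shiftSeq_mem_lyndonSystem hx 1, hw.2⟩⟩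

lemma cons_mem_lyndonLang_of_lt {c : ℕ} {v : List ℕ} (hc : c < d 0) (hv : v ∈ LyndonLang d) :
    c :: v ∈ LyndonLang d := by
  obtain ⟨y, hy, hvy⟩ := mem_lyndonLang_iff.mp hv
  exact cons_mem_lyndonLang_of_prefix hy hvy hc.le
    (Or.inr ⟨0, fun _ hi => absurd hi (Nat.not_lt_zero _), by simpa [seqCons] using hc⟩)

lemma cons_mem_lyndonLang_of_altLtList {c : ℕ} {u v : List ℕ} (hcu : c :: u ∈ LyndonLang d)
    (hv : v ∈ LyndonLang d) (hlen : v.length = u.length) (hvu : altLtList v u) :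
    c :: v ∈ LyndonLang d := by
  obtain ⟨s, hs, hcus⟩ := mem_lyndonLang_iff.mp hcu
  obtain ⟨y, hy, hvy⟩ := mem_lyndonLang_iff.mp hv
  rw [List.length_cons, map_range_succ_eq_cons, List.cons.injEq] at hcus
  have hys : altLt y (shiftSeq s 1) := altLt_of_altLtList hvy hcus.2 hlen hvu
  have hsz : altLt s (seqCons c y) := by
    refine altLt_iff_head.mpr (Or.inr ⟨hcus.1.symm, ?_⟩)
    rwa [shiftSeq_one_seqCons]
  have hds : altLe d s := by simpa [shiftSeq_zero] using hs.2 0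
  exact cons_mem_lyndonLang_of_prefix hy hvy (hcus.1 ▸ hs.1 0)
    (Or.inr (altLt_of_altLe_of_altLt hds hsz))

end Language

section Counting

variable (d : ℕ → ℕ)

def wordsOfLength (n : ℕ) : Set (List ℕ) := {w | w ∈ LyndonLang d ∧ w.length = n}

def wordsAbove (w : List ℕ) : Set (List ℕ) := {x ∈ wordsOfLength d w.length | altLtList w x}

def wordsBelow (w : List ℕ) : Set (List ℕ) := {x ∈ wordsOfLength d w.length | altLtList x w}

def wordsBetween (a b : List ℕ) : Set (List ℕ) :=
  {x | x ∈ LyndonLang d ∧ x.length = a.length ∧ altLeList a x ∧ altLeList x b}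

/-- `Σ_{i=1}^{n} (-1)^i w_i H_{n-i}` for `w = w_1 ⋯ w_n`, reindexed from `0`. -/
noncomputable def altPotential (w : List ℕ) : ℤ :=
  ∑ i ∈ Finset.range w.length, (-1) ^ (i + 1) * (w.getD i 0 : ℤ) * Hword d (w.length - (i + 1))

lemma wordsOfLength_finite : ∀ n, (wordsOfLength d n).Finite
  | 0 => (Set.finite_singleton []).subset fun _ hw => List.length_eq_zero_iff.mp hw.2
  | n + 1 => by
    refine (((Set.finite_Iic (d 0)).prod (wordsOfLength_finite n)).image
      fun p => p.1 :: p.2).subset ?_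
    rintro (_ | ⟨c, v⟩) ⟨hw, hlen⟩
    · simp at hlen
    · obtain ⟨hc, hv⟩ := le_and_mem_of_cons_mem hw
      exact ⟨(c, v), ⟨hc, hv, by simpa using hlen⟩, rfl⟩

lemma wordsAbove_finite (w : List ℕ) : (wordsAbove d w).Finite :=
  (wordsOfLength_finite d w.length).subset (Set.sep_subset _ _)

lemma wordsBelow_finite (w : List ℕ) : (wordsBelow d w).Finite :=
  (wordsOfLength_finite d w.length).subset (Set.sep_subset _ _)

variable {d}

lemma wordsAbove_cons {c : ℕ} {u : List ℕ} (hcu : c :: u ∈ LyndonLang d) :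
    wordsAbove d (c :: u) = (fun p : ℕ × List ℕ => p.1 :: p.2) ''
      (Set.Iio c ×ˢ wordsOfLength d u.length ∪ {c} ×ˢ wordsBelow d u) := by
  ext (_ | ⟨c', v⟩)
  · simp [wordsAbove, wordsOfLength]
  refine Iff.trans ?_ (injective_cons_pair.mem_set_image (a := (c', v))).symm
  constructor
  · rintro ⟨⟨hw, hlen⟩, hlt⟩
    have hv := (le_and_mem_of_cons_mem hw).2
    have hlen' : v.length = u.length := by simpa using hlen
    rcases altLtList_cons_cons_iff.mp hlt with hc' | ⟨rfl, hvu⟩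
    · exact Or.inl ⟨hc', hv, hlen'⟩
    · exact Or.inr ⟨rfl, ⟨hv, hlen'⟩, hvu⟩
  · rintro (⟨hc', hv, hlen⟩ | ⟨rfl, ⟨hv, hlen⟩, hvu⟩)
    · exact ⟨⟨cons_mem_lyndonLang_of_lt (hc'.trans_le (le_and_mem_of_cons_mem hcu).1) hv,
        by simp [hlen]⟩, altLtList_cons_cons_iff.mpr (Or.inl hc')⟩
    · exact ⟨⟨cons_mem_lyndonLang_of_altLtList hcu hv hlen hvu, by simp [hlen]⟩,
        altLtList_cons_cons_iff.mpr (Or.inr ⟨rfl, hvu⟩)⟩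

lemma ncard_wordsAbove_cons {c : ℕ} {u : List ℕ} (hcu : c :: u ∈ LyndonLang d) :
    (wordsAbove d (c :: u)).ncard = c * Hword d u.length + (wordsBelow d u).ncard := by
  rw [wordsAbove_cons hcu, Set.ncard_image_of_injective _ injective_cons_pair,
    Set.ncard_union_eq (Set.disjoint_left.mpr fun p h1 h2 => (h1.1 : p.1 < c).ne h2.1)
      ((Set.finite_Iio c).prod (wordsOfLength_finite d _))
      ((Set.finite_singleton c).prod (wordsBelow_finite d u)),
    Set.ncard_prod, Set.ncard_prod, Set.ncard_Iio_nat, Set.ncard_singleton, one_mul]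
  rfl

lemma ncard_wordsBelow_add_ncard_wordsAbove {u : List ℕ} (hu : u ∈ LyndonLang d) :
    (wordsBelow d u).ncard + (wordsAbove d u).ncard + 1 = Hword d u.length := by
  have hsplit : wordsOfLength d u.length = insert u (wordsBelow d u ∪ wordsAbove d u) := by
    ext x
    constructor
    · intro hx
      rcases altLtList_trichotomy hx.2 with h | rfl | h
      exacts [Or.inr (Or.inl ⟨hx, h⟩), Or.inl rfl, Or.inr (Or.inr ⟨hx, h⟩)]
    · rintro (rfl | ⟨hx, -⟩ | ⟨hx, -⟩)
      exacts [⟨hu, rfl⟩, hx, hx]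
  have hu_notMem : u ∉ wordsBelow d u ∪ wordsAbove d u := by
    rintro (⟨-, h⟩ | ⟨-, h⟩) <;> exact altLt_irrefl _ h
  change _ = (wordsOfLength d u.length).ncard
  rw [hsplit,
    Set.ncard_insert_of_notMem hu_notMem ((wordsBelow_finite d u).union (wordsAbove_finite d u)),
    Set.ncard_union_eq (Set.disjoint_left.mpr fun x h1 h2 => altLt_asymm h1.2 h2.2)
      (wordsBelow_finite d u) (wordsAbove_finite d u)]

lemma ncard_wordsAbove_cons_add {c : ℕ} {u : List ℕ} (hcu : c :: u ∈ LyndonLang d) :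
    (wordsAbove d (c :: u)).ncard + (wordsAbove d u).ncard + 1 = (c + 1) * Hword d u.length := by
  have := ncard_wordsBelow_add_ncard_wordsAbove (le_and_mem_of_cons_mem hcu).2
  rw [ncard_wordsAbove_cons hcu]
  linarith

lemma altPotential_cons (c : ℕ) (u : List ℕ) :
    altPotential d (c :: u) = -(c * Hword d u.length) - altPotential d u := by
  simp only [altPotential, List.length_cons, Finset.sum_range_succ', List.getD_cons_succ,
    List.getD_cons_zero, Nat.add_sub_add_right, pow_succ]
  rw [sub_eq_add_neg, ← Finset.sum_neg_distrib, add_comm]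
  simp

lemma altPotential_sub_altPotential {a b : List ℕ} (hlen : a.length = b.length) :
    altPotential d b - altPotential d a = ∑ i ∈ Finset.Icc 1 a.length,
      (-1) ^ i * ((b.getD (i - 1) 0 : ℤ) - (a.getD (i - 1) 0 : ℤ)) * Hword d (a.length - i) := by
  rw [altPotential, altPotential, ← hlen, ← Finset.sum_sub_distrib,
    ← Finset.Ico_add_one_right_eq_Icc, Finset.sum_Ico_eq_sum_range, Nat.add_sub_cancel]
  refine Finset.sum_congr rfl fun i _ => ?_
  rw [add_comm 1 i, Nat.add_sub_cancel]
  ring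

lemma ncard_wordsAbove_add_altPotential_eq :
    ∀ {a b : List ℕ}, a ∈ LyndonLang d → b ∈ LyndonLang d → a.length = b.length →
      (wordsAbove d a).ncard + altPotential d a = (wordsAbove d b).ncard + altPotential d b
  | [], [], _, _, _ => rfl
  | [], _ :: _, _, _, hlen => absurd hlen (by simp)
  | _ :: _, [], _, _, hlen => absurd hlen (by simp)
  | c :: u, c' :: v, hcu, hcv, hlen => by
    have hlen' : u.length = v.length := by simpa using hlen
    have hu : ((wordsAbove d (c :: u)).ncard : ℤ) + (wordsAbove d u).ncard + 1 =
        (c + 1) * Hword d u.length := by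
      exact_mod_cast ncard_wordsAbove_cons_add hcu
    have hv : ((wordsAbove d (c' :: v)).ncard : ℤ) + (wordsAbove d v).ncard + 1 =
        (c' + 1) * Hword d u.length := by
      rw [hlen']
      exact_mod_cast ncard_wordsAbove_cons_add hcv
    have ih := ncard_wordsAbove_add_altPotential_eq (le_and_mem_of_cons_mem hcu).2
      (le_and_mem_of_cons_mem hcv).2 hlen'
    rw [altPotential_cons, altPotential_cons, ← hlen']
    linarith

lemma ncard_wordsBetween_add_ncard_wordsAbove {a b : List ℕ} (ha : a ∈ LyndonLang d)
    (hlen : a.length = b.length) (hab : altLtList a b) :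
    (wordsBetween d a b).ncard + (wordsAbove d b).ncard = (wordsAbove d a).ncard + 1 := by
  have hfin := wordsOfLength_finite d a.length
  have hsplit : wordsBetween d a b ∪ wordsAbove d b = insert a (wordsAbove d a) := by
    ext x
    constructor
    · rintro (⟨hx, hxlen, hax | hax, -⟩ | ⟨⟨hx, hxlen⟩, hbx⟩)
      · exact Or.inl (eq_of_padSeq_eq hxlen.symm hax).symm
      · exact Or.inr ⟨⟨hx, hxlen⟩, hax⟩
      · exact Or.inr ⟨⟨hx, hxlen.trans hlen.symm⟩, altLt_trans hab hbx⟩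
    · rintro (rfl | ⟨⟨hx, hxlen⟩, hax⟩)
      · exact Or.inl ⟨ha, rfl, Or.inl rfl, Or.inr hab⟩
      · rcases altLtList_trichotomy (hxlen.trans hlen) with hxb | rfl | hbx
        · exact Or.inl ⟨hx, hxlen, Or.inr hax, Or.inr hxb⟩
        · exact Or.inl ⟨hx, hxlen, Or.inr hax, Or.inl rfl⟩
        · exact Or.inr ⟨⟨hx, hxlen.trans hlen⟩, hbx⟩
  have hdisj : Disjoint (wordsBetween d a b) (wordsAbove d b) := Set.disjoint_left.mpr
    fun x hx hbx => altLt_irrefl _ (altLt_of_altLe_of_altLt hx.2.2.2 hbx.2)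
  rw [← Set.ncard_union_eq hdisj (hfin.subset fun x hx => ⟨hx.1, hx.2.1⟩)
      (wordsAbove_finite d b), hsplit,
    Set.ncard_insert_of_notMem (fun h => altLt_irrefl _ h.2) (wordsAbove_finite d a)]

end Counting

theorem stmt1_general (d : ℕ → ℕ) (n : ℕ) (a b : List ℕ)
    (ha : a ∈ LyndonLang d) (hb : b ∈ LyndonLang d)
    (han : a.length = n) (hbn : b.length = n) (hab : altLtList a b) :
    (Set.ncard {x : List ℕ |
        x ∈ LyndonLang d ∧ x.length = n ∧ altLeList a x ∧ altLeList x b} : ℤ) =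
      (∑ i ∈ Finset.Icc 1 n,
        (-1 : ℤ) ^ i * ((b.getD (i - 1) 0 : ℤ) - (a.getD (i - 1) 0 : ℤ)) *
          (Hword d (n - i) : ℤ)) + 1 := by
  subst han
  have hcount : ((wordsBetween d a b).ncard : ℤ) + (wordsAbove d b).ncard =
      (wordsAbove d a).ncard + 1 := by
    exact_mod_cast ncard_wordsBetween_add_ncard_wordsAbove ha hbn.symm hab
  have hinvariant := ncard_wordsAbove_add_altPotential_eq ha hb hbn.symm
  change ((wordsBetween d a b).ncard : ℤ) = _
  rw [← altPotential_sub_altPotential hbn.symm]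
  linarith

/-- Lemma 1: counting the words of `L_M` of length `n` between `A(n)` and `B(n)`. -/
theorem stmt1 (d : ℕ → ℕ) (hd : IsAltLyndon d) (n : ℕ) (a b : List ℕ)
    (ha : a ∈ LyndonLang d) (hb : b ∈ LyndonLang d)
    (han : a.length = n) (hbn : b.length = n) (hab : altLtList a b) :
    (Set.ncard {x : List ℕ |
        x ∈ LyndonLang d ∧ x.length = n ∧ altLeList a x ∧ altLeList x b} : ℤ) =
      (∑ i ∈ Finset.Icc 1 n,
        (-1 : ℤ) ^ i * ((b.getD (i - 1) 0 : ℤ) - (a.getD (i - 1) 0 : ℤ)) *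
          (Hword d (n - i) : ℤ)) + 1 :=
  stmt1_general d n a b ha hb han hbn hab
end

section
/- Let ψ be the substitution on {1,2} with ψ(1) = 2 and ψ(2) = 211, and let ω_n = ψ^n(2) = w_1 w_2 ⋯ w_m. For a finite word a_1⋯a_m over ℕ set (1 a_1⋯a_m)(z) = 1 + Σ_{k=1}^{m} a_k (−z)^k. Then for all n ∈ ℕ, (1 ω_n)(z) = ∏_{k=−1}^{n−1} (1 − z^{|u_k|}) − z^{|u_n|}, as polynomials in z, where u_k = φ^k(1) for k ≥ 0 (φ(0)=1, φ(1)=100) and u_{−1} = 0 (so |u_{−1}| = 1). -/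
open Filter Topology

/-- The substitution `φ` on letters: `φ(0) = 1`, `φ(1) = 100`. -/
def phiL (a : ℕ) : List ℕ := if a = 0 then [1] else [1, 0, 0]
/-- `φ` extended to words. -/
def phiW (w : List ℕ) : List ℕ := w.flatMap phiL
/-- `uW n = φ^n(1)`. -/
def uW (n : ℕ) : List ℕ := phiW^[n] [1]
/-- The infinite fixed point `φ^∞(1)` (each `uW n` is a prefix of `uW (n+1)`,
and `|uW (i+1)| > i`, so the definition below gives the limit word). -/
def phiInf : ℕ → ℕ := fun i => (uW (i + 1)).getD i 0

/-- The substitution `ψ` on letters: `ψ(1) = 2`, `ψ(2) = 211`. -/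
def psiL (a : ℕ) : List ℕ := if a = 1 then [2] else [2, 1, 1]
def psiW (w : List ℕ) : List ℕ := w.flatMap psiL
/-- `omegaW n = ψ^n(2)`. -/
def omegaW (n : ℕ) : List ℕ := psiW^[n] [2]

noncomputable def Spoly (w : List ℕ) (z : ℝ) : ℝ :=
  ∑ k ∈ Finset.range w.length, ((w.getD k 0 : ℝ)) * (-z) ^ (k + 1)

lemma Spoly_append (v w : List ℕ) (z : ℝ) :
    Spoly (v ++ w) z = Spoly v z + (-z) ^ v.length * Spoly w z := by
  simp only [Spoly, List.length_append, Finset.sum_range_add, Finset.mul_sum]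
  congr 1
  · apply Finset.sum_congr rfl
    intro k hk
    rw [List.getD_append _ _ _ _ (Finset.mem_range.1 hk)]
  · apply Finset.sum_congr rfl
    intro k hk
    rw [List.getD_append_right _ _ _ _ (Nat.le_add_right _ _), Nat.add_sub_cancel_left]
    ring_nf


lemma psiW_append (v w : List ℕ) : psiW (v ++ w) = psiW v ++ psiW w :=
  List.flatMap_append ..

lemma phiW_append (v w : List ℕ) : phiW (v ++ w) = phiW v ++ phiW w :=
  List.flatMap_append ..

lemma psiW_iter_append (n : ℕ) (v w : List ℕ) :
    psiW^[n] (v ++ w) = psiW^[n] v ++ psiW^[n] w := by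
  induction n generalizing v w with
  | zero => rfl
  | succ k ih => simp [Function.iterate_succ_apply, psiW_append, ih]

lemma phiW_iter_append (n : ℕ) (v w : List ℕ) :
    phiW^[n] (v ++ w) = phiW^[n] v ++ phiW^[n] w := by
  induction n generalizing v w with
  | zero => rfl
  | succ k ih => simp [Function.iterate_succ_apply, phiW_append, ih]

lemma omegaW_rec (n : ℕ) :
    omegaW (n + 2) = omegaW (n + 1) ++ (omegaW n ++ omegaW n) := by
  have h2 : psiW (psiW [2]) = ([2,1,1] : List ℕ) ++ ([2] ++ [2]) := by
    simp [psiW, psiL]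
  have : omegaW (n + 2) = psiW^[n] (psiW (psiW [2])) := by
    simp [omegaW, Function.iterate_succ_apply]
  rw [this, h2, psiW_iter_append, psiW_iter_append]
  have h1 : omegaW (n + 1) = psiW^[n] [2,1,1] := by
    simp [omegaW, Function.iterate_succ_apply, psiW, psiL]
  rw [h1]; rfl

lemma uW_rec (n : ℕ) :
    uW (n + 2) = uW (n + 1) ++ (uW n ++ uW n) := by
  have h2 : phiW (phiW [1]) = ([1,0,0] : List ℕ) ++ ([1] ++ [1]) := by
    simp [phiW, phiL]
  have : uW (n + 2) = phiW^[n] (phiW (phiW [1])) := by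
    simp [uW, Function.iterate_succ_apply]
  rw [this, h2, phiW_iter_append, phiW_iter_append]
  have h1 : uW (n + 1) = phiW^[n] [1,0,0] := by
    simp [uW, Function.iterate_succ_apply, phiW, phiL]
  rw [h1]; rfl

lemma twoStep {P : ℕ → Prop} (h0 : P 0) (h1 : P 1)
    (ih : ∀ n, P n → P (n + 1) → P (n + 2)) : ∀ n, P n := by
  have key : ∀ n, P n ∧ P (n + 1) := by
    intro n
    induction n with
    | zero => exact ⟨h0, h1⟩
    | succ k h => exact ⟨h.2, ih k h.1 h.2⟩
  exact fun n => (key n).1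

lemma len_eq : ∀ n, (omegaW n).length = (uW n).length := by
  apply twoStep
  · rfl
  · rfl
  · intro n h0 h1
    rw [omegaW_rec, uW_rec]
    simp [h0, h1]

lemma odd_len : ∀ n, Odd (uW n).length := by
  apply twoStep
  · exact ⟨0, rfl⟩
  · exact ⟨1, rfl⟩
  · intro n h0 h1
    rw [uW_rec]
    simp only [List.length_append]
    obtain ⟨a, ha⟩ := h0
    obtain ⟨b, hb⟩ := h1
    exact ⟨b + 2 * a + 1, by omega⟩

theorem main (n : ℕ) : ∀ z : ℝ,
    1 + Spoly (omegaW n) z =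
      (1 - z) * (∏ k ∈ Finset.range n, (1 - z ^ (uW k).length)) -
        z ^ (uW n).length := by
  induction n using twoStep with
  | h0 =>
    intro z
    simp [Spoly, omegaW, uW]
    ring
  | h1 =>
    intro z
    have ho : omegaW 1 = [2,1,1] := by simp [omegaW, psiW, psiL]
    have hu : uW 1 = [1,0,0] := by simp [uW, phiW, phiL]
    rw [ho, hu]
    simp [Spoly, Finset.sum_range_succ, uW]
    ring
  | ih n ih0 ih1 =>
    intro z
    have ih0 := ih0 z
    have ih1 := ih1 z
    rw [omegaW_rec, Spoly_append, Spoly_append]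
    rw [len_eq, len_eq]
    have hop : Odd (uW n).length := odd_len n
    have hoq : Odd (uW (n+1)).length := odd_len (n+1)
    rw [hoq.neg_pow, hop.neg_pow]
    have hlen : (uW (n+2)).length = (uW (n+1)).length + ((uW n).length + (uW n).length) := by
      rw [uW_rec]; simp
    rw [hlen, Finset.prod_range_succ, Finset.prod_range_succ, pow_add, pow_add]
    rw [Finset.prod_range_succ] at ih1
    linear_combination ih1 + (-(z ^ (uW (n+1)).length) * (1 - z ^ (uW n).length)) * ih0

/-- The identity `(1 ω_n)(z) = ∏_{k=−1}^{n−1} (1 − z^{|u_k|}) − z^{|u_n|}`,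
where `|u_{−1}| = 1`, as functions of `z` (equivalently as polynomials). -/
theorem stmt7 (n : ℕ) (z : ℝ) :
    1 + ∑ k ∈ Finset.range (omegaW n).length,
        ((omegaW n).getD k 0 : ℝ) * (-z) ^ (k + 1) =
      (1 - z) * (∏ k ∈ Finset.range n, (1 - z ^ (uW k).length)) -
        z ^ (uW n).length := by
  exact main n z
end
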